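/- arXiv:1407.0503 — 7 statements merged into one kernel-verified Lean document; each statement's English description precedes it below -/
import Mathlib

section
/- Let X be a Hausdorff perfect paracompact topological space (perfect meaning every open subset of X is an Fσ-set) and let E be a nonempty subspace of X that is completely metrizable (its subspace topology is induced by some complete metric). Then E is an H₁-retract of X; that is, there exists a mapping r : X → E with r(x) = x for all x ∈ E such that for every open set V of E the preimage r⁻¹(V) is an Fσ-set in X. -/
/-- A set is an Fσ-set if it is a countable union of closed sets. -/
def IsFsigma {X : Type*} [TopologicalSpace X] (A : Set X) : Prop :=
  ∃ F : ℕ → Set X, (∀ n, IsClosed (F n)) ∧ A = ⋃ n, F n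

/-- A mapping is of the first Lebesgue class if the preimage of every open set is Fσ. -/
def LebesgueClassOne {X Y : Type*} [TopologicalSpace X] [TopologicalSpace Y] (g : X → Y) : Prop :=
  ∀ V : Set Y, IsOpen V → IsFsigma (g ⁻¹' V)

/-- `E` is an H₁-retract of `X` if there is a first Lebesgue class map `r : X → E`
fixing the points of `E`. -/
def IsH1Retract {X : Type*} [TopologicalSpace X] (E : Set X) : Prop :=
  ∃ r : X → E, (∀ x : E, r x = x) ∧ LebesgueClassOne r
/-- A topological space is completely metrizable if its topology is induced by some
complete metric. -/
def CompletelyMetrizable (X : Type*) [t : TopologicalSpace X] : Prop :=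
  ∃ m : MetricSpace X, m.toUniformSpace.toTopologicalSpace = t ∧ @CompleteSpace X m.toUniformSpace


/-!
The retraction is a uniform limit of maps `r n : X → E` that are constant on the pieces of
partitions of `X` whose pieces are unions of σ-locally finite families of closed sets, so that
every union of pieces, hence every preimage under `r n`, is Fσ. Paracompactness (a locally
finite refinement, disjointified along a well-order) and perfectness (open sets are Fσ) give
such partitions subordinate to any open cover of an open set, in particular to a cover by open
sets whose traces on `E` have diameter `≤ 2⁻ⁿ⁻¹`. Refining the fibres of `r n` by the next
partition and sending each piece that meets `E` to one of its points in `E` keeps `r (n + 1)`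
uniformly `2⁻ⁿ⁻¹`-close to `r n` while moving points of `E` by at most `2⁻ⁿ⁻²`. By completeness
the limit exists; it fixes `E`, and a uniform limit of maps of the first Lebesgue class is again
of that class.
-/

open Set Filter Topology Metric

section Fsigma

variable {X : Type*} [TopologicalSpace X]

theorem isFsigma_iff_isGδ_compl {s : Set X} : IsFsigma s ↔ IsGδ sᶜ := by
  rw [isGδ_iff_eq_iInter_nat]
  constructor
  · rintro ⟨F, hF, rfl⟩
    exact ⟨fun n => (F n)ᶜ, fun n => (hF n).isOpen_compl, compl_iUnion F⟩
  · rintro ⟨G, hG, hsG⟩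
    refine ⟨fun n => (G n)ᶜ, fun n => (hG n).isClosed_compl, ?_⟩
    rw [← compl_iInter, ← hsG, compl_compl]

theorem IsClosed.isFsigma {s : Set X} (hs : IsClosed s) : IsFsigma s :=
  isFsigma_iff_isGδ_compl.2 hs.isOpen_compl.isGδ

theorem isFsigma_iUnion {ι : Sort*} [Countable ι] {s : ι → Set X} (hs : ∀ i, IsFsigma (s i)) :
    IsFsigma (⋃ i, s i) := by
  rw [isFsigma_iff_isGδ_compl, compl_iUnion]
  exact .iInter fun i => isFsigma_iff_isGδ_compl.1 (hs i)

theorem IsFsigma.inter {s t : Set X} (hs : IsFsigma s) (ht : IsFsigma t) : IsFsigma (s ∩ t) := by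
  rw [isFsigma_iff_isGδ_compl, compl_inter]
  exact (isFsigma_iff_isGδ_compl.1 hs).union (isFsigma_iff_isGδ_compl.1 ht)

end Fsigma

section LocallyFinite

variable {ι ι' X : Type*} [TopologicalSpace X] {f : ι → Set X}

theorem LocallyFinite.isClosed_biUnion (hf : LocallyFinite f) (hc : ∀ i, IsClosed (f i))
    (s : Set ι) : IsClosed (⋃ i ∈ s, f i) := by
  rw [biUnion_eq_iUnion]
  exact (hf.comp_injective Subtype.val_injective).isClosed_iUnion fun i => hc i

theorem LocallyFinite.biUnion_preimage_singleton (hf : LocallyFinite f) (φ : ι → ι') :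
    LocallyFinite fun j => ⋃ i ∈ φ ⁻¹' {j}, f i := by
  intro x
  obtain ⟨U, hU, hUf⟩ := hf x
  refine ⟨U, hU, (hUf.image φ).subset ?_⟩
  rintro j ⟨z, hz, hzU⟩
  obtain ⟨i, hi, hzi⟩ := mem_iUnion₂.1 hz
  exact ⟨i, ⟨z, hzi, hzU⟩, hi⟩

end LocallyFinite

def HasSigmaLocallyFiniteFibers {X α : Type*} [TopologicalSpace X] (g : X → α) : Prop :=
  ∃ (κ : Type) (_ : Countable κ) (C : κ → α → Set X),
    (∀ k a, IsClosed (C k a)) ∧ (∀ k, LocallyFinite (C k)) ∧ ∀ a, g ⁻¹' {a} = ⋃ k, C k a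

namespace HasSigmaLocallyFiniteFibers

variable {X α β : Type*} [TopologicalSpace X] {g : X → α} {h : X → β}

theorem isFsigma_preimage (hg : HasSigmaLocallyFiniteFibers g) (S : Set α) :
    IsFsigma (g ⁻¹' S) := by
  obtain ⟨κ, _, C, hCc, hClf, hC⟩ := hg
  have hS : g ⁻¹' S = ⋃ k, ⋃ a ∈ S, C k a := by
    rw [← biUnion_preimage_singleton, iUnion_comm]
    simp only [hC, iUnion_comm (ι := κ)]
  rw [hS]
  exact isFsigma_iUnion fun k => ((hClf k).isClosed_biUnion (hCc k) S).isFsigma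

theorem lebesgueClassOne [TopologicalSpace α] (hg : HasSigmaLocallyFiniteFibers g) :
    LebesgueClassOne g :=
  fun V _ => hg.isFsigma_preimage V

theorem comp (hg : HasSigmaLocallyFiniteFibers g) (φ : α → β) :
    HasSigmaLocallyFiniteFibers (φ ∘ g) := by
  obtain ⟨κ, _, C, hCc, hClf, hC⟩ := hg
  refine ⟨κ, inferInstance, fun k b => ⋃ a ∈ φ ⁻¹' {b}, C k a,
    fun k b => (hClf k).isClosed_biUnion (hCc k) _,
    fun k => (hClf k).biUnion_preimage_singleton φ, fun b => ?_⟩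
  rw [preimage_comp, ← biUnion_preimage_singleton, iUnion_comm]
  simp only [hC, iUnion_comm (ι := κ)]

theorem prodMk (hg : HasSigmaLocallyFiniteFibers g) (hh : HasSigmaLocallyFiniteFibers h) :
    HasSigmaLocallyFiniteFibers fun x => (g x, h x) := by
  obtain ⟨κ, _, C, hCc, hClf, hC⟩ := hg
  obtain ⟨κ', _, D, hDc, hDlf, hD⟩ := hh
  refine ⟨κ × κ', inferInstance, fun k p => C k.1 p.1 ∩ D k.2 p.2,
    fun k p => (hCc _ _).inter (hDc _ _), fun k x => ?_, fun p => ?_⟩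
  · obtain ⟨U, hU, hUf⟩ := hClf k.1 x
    obtain ⟨V, hV, hVf⟩ := hDlf k.2 x
    refine ⟨U ∩ V, inter_mem hU hV, (hUf.prod hVf).subset ?_⟩
    rintro ⟨a, b⟩ ⟨z, ⟨hzC, hzD⟩, hzU, hzV⟩
    exact ⟨⟨z, hzC, hzU⟩, ⟨z, hzD, hzV⟩⟩
  · have : (fun x => (g x, h x)) ⁻¹' {p} = g ⁻¹' {p.1} ∩ h ⁻¹' {p.2} := by
      ext x; simp [Prod.ext_iff]
    rw [this, hC, hD, iUnion_inter_iUnion, iUnion_prod']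

end HasSigmaLocallyFiniteFibers

theorem HasSigmaLocallyFiniteFibers.glue {X α : Type*} {κ : Type} [TopologicalSpace X]
    [Countable κ] {ℓ : X → κ} (hℓ : ∀ k, IsFsigma (ℓ ⁻¹' {k})) {g : κ → X → α}
    (hg : ∀ k, HasSigmaLocallyFiniteFibers (g k)) :
    HasSigmaLocallyFiniteFibers fun x => g (ℓ x) x := by
  choose L hLc hL using hℓ
  choose ι _ C hCc hClf hC using hg
  refine ⟨Σ k, ℕ × ι k, inferInstance, fun (⟨k, m, n⟩ : Σ k, ℕ × ι k) a => L k m ∩ C k n a,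
    fun ⟨k, m, n⟩ a => (hLc k m).inter (hCc k n a),
    fun ⟨k, _, n⟩ => (hClf k n).subset fun a => inter_subset_right, fun a => ?_⟩
  ext x
  simp only [mem_preimage, mem_singleton_iff, mem_iUnion, mem_inter_iff, Sigma.exists,
    Prod.exists]
  constructor
  · intro hx
    obtain ⟨m, hm⟩ := mem_iUnion.1 (hL (ℓ x) ▸ rfl : x ∈ ⋃ m, L (ℓ x) m)
    obtain ⟨n, hn⟩ := mem_iUnion.1 (hC (ℓ x) a ▸ hx : x ∈ ⋃ n, C (ℓ x) n a)
    exact ⟨ℓ x, m, n, hm, hn⟩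
  · rintro ⟨k, m, n, hm, hn⟩
    obtain rfl : x ∈ ℓ ⁻¹' {k} := (hL k).symm ▸ mem_iUnion.2 ⟨m, hm⟩
    exact ((hC (ℓ x) a).symm ▸ mem_iUnion.2 ⟨n, hn⟩ : x ∈ g (ℓ x) ⁻¹' {a})

section Subordinate

variable {X ι : Type*} [TopologicalSpace X]
  (hperf : ∀ U : Set X, IsOpen U → IsFsigma U)
include hperf

theorem isFsigma_preimage_nat_find {S : ℕ → Set X} (hS : ∀ k, IsClosed (S k))
    (hcov : ∀ x, ∃ k, x ∈ S k) [∀ x, DecidablePred fun k => x ∈ S k] (k : ℕ) :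
    IsFsigma ((fun x => Nat.find (hcov x)) ⁻¹' {k}) := by
  have : (fun x => Nat.find (hcov x)) ⁻¹' {k} = S k ∩ ⋂ j ∈ Iio k, (S j)ᶜ := by
    ext x
    simp [Nat.find_eq_iff]
  rw [this]
  exact (hS k).isFsigma.inter
    (hperf _ ((finite_Iio k).isOpen_biInter fun j _ => (hS j).isOpen_compl))

theorem exists_hasSigmaLocallyFiniteFibers_mem [ParacompactSpace X] {U : ι → Set X}
    (hU : ∀ i, IsOpen (U i)) (hcov : ⋃ i, U i = univ) :
    ∃ g : X → ι, HasSigmaLocallyFiniteFibers g ∧ ∀ x, x ∈ U (g x) := by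
  obtain ⟨v, hvo, hvcov, hvlf, hvU⟩ := precise_refinement U hU hcov
  obtain ⟨_, _⟩ := exists_wellFoundedLT ι
  have wf : WellFounded ((· < ·) : ι → ι → Prop) := wellFounded_lt
  have hv : ∀ x, {i | x ∈ v i}.Nonempty := fun x => mem_iUnion.1 (hvcov ▸ mem_univ x)
  let g x := wf.min _ (hv x)
  have hfiber : ∀ i, g ⁻¹' {i} = v i ∩ (⋃ j < i, v j)ᶜ := by
    intro i
    ext x
    simp only [mem_preimage, mem_singleton_iff, mem_inter_iff, mem_compl_iff, mem_iUnion,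
      not_exists]
    constructor
    · rintro rfl
      exact ⟨wf.min_mem _ (hv x), fun j hj hxj => wf.not_lt_min _ hxj hj⟩
    · rintro ⟨hxi, hlt⟩
      refine le_antisymm (wf.min_le hxi) (not_lt.1 fun hi => ?_)
      exact hlt _ hi (wf.min_mem _ (hv x))
  choose G hGc hG using fun i => hperf (v i) (hvo i)
  refine ⟨g, ⟨ℕ, inferInstance, fun n i => G i n ∩ (⋃ j < i, v j)ᶜ,
    fun n i => (hGc i n).inter (isOpen_biUnion fun j _ => hvo j).isClosed_compl,
    fun n => hvlf.subset fun i => inter_subset_left.trans (hG i ▸ subset_iUnion _ n),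
    fun i => by rw [hfiber, hG, iUnion_inter]⟩,
    fun x => hvU _ (wf.min_mem _ (hv x))⟩

theorem exists_hasSigmaLocallyFiniteFibers_option_mem [ParacompactSpace X] {U : ι → Set X}
    (hU : ∀ i, IsOpen (U i)) :
    ∃ g : X → Option ι, HasSigmaLocallyFiniteFibers g ∧
      ∀ x ∈ ⋃ i, U i, ∃ i, g x = some i ∧ x ∈ U i := by
  classical
  obtain ⟨F, hFc, hUF⟩ := hperf _ (isOpen_iUnion hU)
  have hcov : ∀ k, ⋃ o : Option ι, o.elim (F k)ᶜ U = univ := by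
    intro k
    refine eq_univ_of_forall fun x => ?_
    by_cases hx : x ∈ F k
    · obtain ⟨i, hi⟩ := mem_iUnion.1 (hUF ▸ mem_iUnion.2 ⟨k, hx⟩ : x ∈ ⋃ i, U i)
      exact mem_iUnion.2 ⟨some i, hi⟩
    · exact mem_iUnion.2 ⟨none, hx⟩
  choose g hg hgU using fun k => exists_hasSigmaLocallyFiniteFibers_mem hperf
    (fun o : Option ι => o.rec (hFc k).isOpen_compl hU) (hcov k)
  -- A point is sorted by the partition `g k` for the first `k` with `x ∈ F k ∪ (⋃ i, U i)ᶜ`.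
  have hS : ∀ x, ∃ k, x ∈ F k ∪ (⋃ i, U i)ᶜ := by
    intro x
    by_cases hx : x ∈ ⋃ i, U i
    · exact (mem_iUnion.1 (hUF ▸ hx)).imp fun k => Or.inl
    · exact ⟨0, Or.inr hx⟩
  refine ⟨fun x => g (Nat.find (hS x)) x,
    .glue (isFsigma_preimage_nat_find hperf
      (fun k => (hFc k).union (isOpen_iUnion hU).isClosed_compl) hS) hg, fun x hx => ?_⟩
  have hxF : x ∈ F (Nat.find (hS x)) := (Nat.find_spec (hS x)).resolve_right (not_not.2 hx)
  have := hgU (Nat.find (hS x)) x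
  cases h : g (Nat.find (hS x)) x with
  | none => rw [h] at this; exact absurd hxF this
  | some i => rw [h] at this; exact ⟨i, h, this⟩

end Subordinate

theorem exists_hasSigmaLocallyFiniteFibers_dist_le {X Y : Type*} [TopologicalSpace X]
    [ParacompactSpace X] (hperf : ∀ U : Set X, IsOpen U → IsFsigma U) [PseudoMetricSpace Y]
    {e : Y → X} (he : IsInducing e) {δ : ℝ} (hδ : 0 < δ) :
    ∃ g : X → Option Y, HasSigmaLocallyFiniteFibers g ∧
      ∀ y y', g (e y) = g (e y') → dist y y' ≤ δ := by
  choose W hWo hW using fun y : Y => he.isOpen_iff.1 (isOpen_ball (x := y) (ε := δ / 2))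
  obtain ⟨g, hg, hgW⟩ := exists_hasSigmaLocallyFiniteFibers_option_mem hperf hWo
  have hmem : ∀ y, e y ∈ ⋃ i, W i := fun y =>
    mem_iUnion.2 ⟨y, by rw [← mem_preimage, hW]; exact mem_ball_self (half_pos hδ)⟩
  have hball : ∀ y, ∃ i, g (e y) = some i ∧ dist y i < δ / 2 := fun y =>
    (hgW _ (hmem y)).imp fun i hi => ⟨hi.1, (hW i ▸ hi.2 : y ∈ ball i (δ / 2))⟩
  refine ⟨g, hg, fun y y' hyy' => ?_⟩
  obtain ⟨i, hi, hyi⟩ := hball y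
  obtain ⟨i', hi', hyi'⟩ := hball y'
  obtain rfl : i = i' := Option.some_injective _ (hi.symm.trans (hyy'.trans hi'))
  linarith [dist_triangle_right y y' i]

theorem tendsto_div_two_pow_atTop_nhds_zero (C : ℝ) :
    Tendsto (fun n : ℕ => C / 2 ^ n) atTop (𝓝 0) := by
  simpa [div_eq_mul_inv] using (tendsto_pow_atTop_nhds_zero_of_lt_one (r := (1 / 2 : ℝ))
    (by norm_num) (by norm_num)).const_mul C

section UniformLimit

variable {X Y : Type*} [PseudoMetricSpace Y]

theorem exists_tendstoUniformly_of_dist_le_geometric_two [CompleteSpace Y] {f : ℕ → X → Y}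
    {C : ℝ} (hf : ∀ n x, dist (f n x) (f (n + 1) x) ≤ C / 2 / 2 ^ n) :
    ∃ F : X → Y, TendstoUniformly f F atTop := by
  choose F hF using fun x =>
    cauchySeq_tendsto_of_complete (cauchySeq_of_le_geometric_two (hf · x))
  refine ⟨F, Metric.tendstoUniformly_iff.2 fun ε hε => ?_⟩
  filter_upwards [(tendsto_div_two_pow_atTop_nhds_zero C).eventually (gt_mem_nhds hε)] with n hn x
  rw [dist_comm]
  exact (dist_le_of_le_geometric_two_of_tendsto (hf · x) (hF x) n).trans_lt hn

theorem LebesgueClassOne.of_tendstoUniformly [TopologicalSpace X] {f : ℕ → X → Y} {F : X → Y}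
    (hf : ∀ n, LebesgueClassOne (f n)) (hfF : TendstoUniformly f F atTop) :
    LebesgueClassOne F := by
  intro V hV
  choose N hN using fun m : ℕ =>
    (Metric.tendstoUniformly_iff.1 hfF _ (Nat.one_div_pos_of_nat (n := m))).exists
  -- `F x ∈ V` is detected by `f (N m) x` staying `1 / (m + 1)`-away from `Vᶜ` for some `m`.
  have hpre : F ⁻¹' V = ⋃ m : ℕ, f (N m) ⁻¹' (cthickening (1 / (m + 1)) Vᶜ)ᶜ := by
    ext x
    simp only [mem_preimage, mem_iUnion, mem_compl_iff]
    constructor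
    · intro hx
      have hclos : F x ∉ closure Vᶜ := by rwa [hV.isClosed_compl.closure_eq, notMem_compl_iff]
      simp only [closure_eq_iInter_cthickening, mem_iInter, not_forall] at hclos
      obtain ⟨δ, hδ, hxδ⟩ := hclos
      obtain ⟨m, hm⟩ := exists_nat_one_div_lt (half_pos hδ)
      refine ⟨m, fun hfx => hxδ ?_⟩
      have hx2 := cthickening_cthickening_subset (by positivity) (by positivity) _
        (mem_cthickening_of_dist_le _ _ _ _ hfx (hN m x).le)
      exact cthickening_mono (by linarith) _ hx2
    · rintro ⟨m, hm⟩
      by_contra hx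
      exact hm (mem_cthickening_of_dist_le _ _ _ _ hx (dist_comm (F x) _ ▸ (hN m x).le))
  rw [hpre]
  exact isFsigma_iUnion fun m => hf _ _ isClosed_cthickening.isOpen_compl

end UniformLimit

section Retraction

variable {X Y α : Type*} {e : Y → X}

variable (e) in
open Classical in
noncomputable def refineAlong (g : X → α) (r : X → Y) (x : X) : Y :=
  if h : ∃ y, g (e y) = g x ∧ r (e y) = r x then h.choose else r x

open Classical in
theorem HasSigmaLocallyFiniteFibers.refineAlong [TopologicalSpace X] {g : X → α} {r : X → Y}
    (hg : HasSigmaLocallyFiniteFibers g) (hr : HasSigmaLocallyFiniteFibers r) :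
    HasSigmaLocallyFiniteFibers (refineAlong e g r) :=
  (hg.prodMk hr).comp fun p => if h : ∃ y, g (e y) = p.1 ∧ r (e y) = p.2 then h.choose else p.2

theorem dist_refineAlong_self_le [PseudoMetricSpace Y] {g : X → α} {δ : ℝ}
    (hg : ∀ y y', g (e y) = g (e y') → dist y y' ≤ δ) (r : X → Y) (y : Y) :
    dist (refineAlong e g r (e y)) y ≤ δ := by
  have h : ∃ y', g (e y') = g (e y) ∧ r (e y') = r (e y) := ⟨y, rfl, rfl⟩
  rw [refineAlong, dif_pos h]
  exact hg _ _ h.choose_spec.1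

theorem dist_refineAlong_le [PseudoMetricSpace Y] (g : X → α) {r : X → Y} {η : ℝ}
    (hη : 0 ≤ η) (hr : ∀ y, dist (r (e y)) y ≤ η) (x : X) :
    dist (refineAlong e g r x) (r x) ≤ η := by
  unfold refineAlong
  split_ifs with h
  · calc dist h.choose (r x) = dist (r (e h.choose)) h.choose := by
          rw [h.choose_spec.2, dist_comm]
      _ ≤ η := hr _
  · rwa [dist_self]

variable (e) in
noncomputable def iterRefineAlong (g : ℕ → X → α) (y₀ : Y) : ℕ → X → Y
  | 0 => refineAlong e (g 0) fun _ => y₀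
  | n + 1 => refineAlong e (g (n + 1)) (iterRefineAlong g y₀ n)

variable {g : ℕ → X → α} (y₀ : Y)

theorem HasSigmaLocallyFiniteFibers.iterRefineAlong [TopologicalSpace X]
    (hg : ∀ n, HasSigmaLocallyFiniteFibers (g n)) (n : ℕ) :
    HasSigmaLocallyFiniteFibers (iterRefineAlong e g y₀ n) := by
  induction n with
  | zero => exact (hg 0).refineAlong ((hg 0).comp fun _ => y₀)
  | succ n ih => exact (hg (n + 1)).refineAlong ih

variable [PseudoMetricSpace Y] {δ : ℕ → ℝ}
  (hg : ∀ n y y', g n (e y) = g n (e y') → dist y y' ≤ δ n)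
include hg

theorem dist_iterRefineAlong_self_le (n : ℕ) (y : Y) :
    dist (iterRefineAlong e g y₀ n (e y)) y ≤ δ n := by
  cases n <;> exact dist_refineAlong_self_le (hg _) _ y

theorem dist_iterRefineAlong_succ_le (n : ℕ) (x : X) :
    dist (iterRefineAlong e g y₀ (n + 1) x) (iterRefineAlong e g y₀ n x) ≤ δ n :=
  dist_refineAlong_le _ ((dist_self y₀).symm.le.trans (hg n y₀ y₀ rfl))
    (dist_iterRefineAlong_self_le y₀ hg n) x

end Retraction

theorem exists_lebesgueClassOne_retraction {X Y : Type*} [TopologicalSpace X]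
    [ParacompactSpace X] (hperf : ∀ U : Set X, IsOpen U → IsFsigma U) [MetricSpace Y]
    [CompleteSpace Y] [Nonempty Y] {e : Y → X} (he : IsInducing e) :
    ∃ r : X → Y, (∀ y, r (e y) = y) ∧ LebesgueClassOne r := by
  choose g hg hgδ using fun n : ℕ =>
    exists_hasSigmaLocallyFiniteFibers_dist_le hperf he (δ := 1 / 2 / 2 ^ n) (by positivity)
  obtain ⟨y₀⟩ := ‹Nonempty Y›
  set r := iterRefineAlong e g y₀
  obtain ⟨F, hF⟩ := exists_tendstoUniformly_of_dist_le_geometric_two fun n x =>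
    (dist_comm (r n x) _).trans_le (dist_iterRefineAlong_succ_le y₀ hgδ n x)
  refine ⟨F, fun y => tendsto_nhds_unique (hF.tendsto_at (e y)) ?_,
    .of_tendstoUniformly (fun n => (HasSigmaLocallyFiniteFibers.iterRefineAlong y₀ hg n)
      |>.lebesgueClassOne) hF⟩
  exact tendsto_iff_dist_tendsto_zero.2 <|
    squeeze_zero (fun _ => dist_nonneg) (dist_iterRefineAlong_self_le y₀ hgδ · y)
      (tendsto_div_two_pow_atTop_nhds_zero _)

theorem isH1Retract_of_completelyMetrizable_subspace_general
    {X : Type*} [TopologicalSpace X] [ParacompactSpace X]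
    (hperf : ∀ U : Set X, IsOpen U → IsFsigma U)
    (E : Set X) (hne : E.Nonempty) (hcm : CompletelyMetrizable E) :
    IsH1Retract E := by
  obtain ⟨m, hm, hcomplete⟩ := hcm
  let _ : MetricSpace E := m.replaceTopology hm.symm
  have : CompleteSpace E := by convert hcomplete; exact m.replaceTopology_eq hm.symm
  have := hne.to_subtype
  exact exists_lebesgueClassOne_retraction hperf IsInducing.subtypeVal

/-- **Theorem (main).** If `X` is a Hausdorff perfect paracompact space (every open set is Fσ)
and `E` is a nonempty completely metrizable subspace of `X`, then `E` is an H₁-retract of `X`. -/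
theorem isH1Retract_of_completelyMetrizable_subspace
    {X : Type*} [TopologicalSpace X] [T2Space X] [ParacompactSpace X]
    (hperf : ∀ U : Set X, IsOpen U → IsFsigma U)
    (E : Set X) (hne : E.Nonempty) (hcm : CompletelyMetrizable E) :
    IsH1Retract E :=
  isH1Retract_of_completelyMetrizable_subspace_general hperf E hne hcm
end

section
/- Let E be an H₁-retract of a topological space X. Then E, with the subspace topology, is a perfect space; that is, every open subset of E is an Fσ-set in E. -/
/-- An H₁-retract of a topological space is a perfect space: every open subset of `E`
is an Fσ-set in `E`. -/
theorem perfect_of_isH1Retract {X : Type*} [TopologicalSpace X] {E : Set X}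
    (h : IsH1Retract E) :
    ∀ V : Set E, IsOpen V → IsFsigma V := by
  obtain ⟨r, hr, hlc⟩ := h
  intro V hV
  obtain ⟨F, hFc, hFU⟩ := hlc V hV
  refine ⟨fun n => Subtype.val ⁻¹' F n, fun n => (hFc n).preimage continuous_subtype_val, ?_⟩
  have : V = Subtype.val ⁻¹' (r ⁻¹' V) := by
    ext e
    simp [hr e]
  rw [this, hFU, Set.preimage_iUnion]
end

section
/- Let X be the set [0,1] × {0,1} endowed with the order topology of the lexicographic order. For a set A ⊆ X write A⁺ = {x ∈ [0,1] : (x,1) ∈ A} and A⁻ = {x ∈ [0,1] : (x,0) ∈ A}. Then for every open set A in X, the symmetric difference A⁺ Δ A⁻ is a countable set. -/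
open scoped symmDiff

/-- The double arrow space: `[0,1] × {0,1}` with the order topology of the
lexicographic order. -/
abbrev DoubleArrow : Type := ↥(Set.Icc (0:ℝ) 1) ×ₗ Fin 2

noncomputable instance : TopologicalSpace DoubleArrow := Preorder.topology DoubleArrow

instance : OrderTopology DoubleArrow := ⟨rfl⟩

/-!
If `(x, 1) ∈ A` and `(x, 0) ∉ A` with `x < 1`, a neighbourhood `[(x, 1), (z, _))` inside `A`
puts `(y, 0)` into `A` for every `y ∈ (x, z)`, so no other such point lies in `(x, z)`. Points of a
second countable linear order that are isolated from the right within a set in this way are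
countably many (the gaps are pairwise disjoint intervals). The points with `(x, 0) ∈ A`,
`(x, 1) ∉ A` are handled symmetrically, with gaps on the left.
-/

open Set Topology

section Countable

variable {α : Type*} [LinearOrder α] [TopologicalSpace α] [OrderTopology α]
  [SecondCountableTopology α] {s : Set α}

theorem countable_of_forall_exists_gap_right
    (h : ∀ x ∈ s, ¬IsTop x → ∃ z, x < z ∧ ∀ y ∈ s, x < y → z ≤ y) : s.Countable := by
  refine ((countable_image_lt_image_Ioi_within s id).union
    (subsingleton_isTop α).countable).mono fun x hx ↦ ?_
  by_cases hx_top : IsTop x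
  · exact Or.inr hx_top
  · exact Or.inl ⟨hx, h x hx hx_top⟩

theorem countable_of_forall_exists_gap_left
    (h : ∀ x ∈ s, ¬IsBot x → ∃ z, z < x ∧ ∀ y ∈ s, y < x → y ≤ z) : s.Countable := by
  refine ((countable_image_lt_image_Iio_within s id).union
    (subsingleton_isBot α).countable).mono fun x hx ↦ ?_
  by_cases hx_bot : IsBot x
  · exact Or.inr hx_bot
  · exact Or.inl ⟨hx, h x hx hx_bot⟩

end Countable

section Lex

variable {α β : Type*} [LinearOrder α] [LinearOrder β] [TopologicalSpace (α ×ₗ β)]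
  [OrderTopology (α ×ₗ β)] {A : Set (α ×ₗ β)} {x : α} {b : β}

theorem Prod.Lex.exists_gt_forall_mem_of_mem_nhds (hA : A ∈ 𝓝 (toLex (x, b))) (hb : IsTop b)
    (hx : ¬IsTop x) : ∃ z, x < z ∧ ∀ y ∈ Ioo x z, ∀ c, toLex (y, c) ∈ A := by
  obtain ⟨x', hxx'⟩ : ∃ x', x < x' := by simpa [IsTop] using hx
  obtain ⟨u, hxu, hu⟩ := exists_Ico_subset_of_mem_nhds hA
    ⟨toLex (x', b), Prod.Lex.toLex_lt_toLex.mpr (.inl hxx')⟩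
  have hxu₁ : x < (ofLex u).1 := by
    rcases Prod.Lex.lt_iff.mp hxu with h | ⟨-, h⟩
    · exact h
    · exact absurd (hb _) h.not_ge
  refine ⟨(ofLex u).1, hxu₁, fun y hy c ↦ hu ⟨?_, ?_⟩⟩
  · exact (Prod.Lex.toLex_lt_toLex.mpr (.inl hy.1)).le
  · exact Prod.Lex.lt_iff.mpr (.inl hy.2)

theorem Prod.Lex.exists_lt_forall_mem_of_mem_nhds (hA : A ∈ 𝓝 (toLex (x, b))) (hb : IsBot b)
    (hx : ¬IsBot x) : ∃ z, z < x ∧ ∀ y ∈ Ioo z x, ∀ c, toLex (y, c) ∈ A := by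
  obtain ⟨x', hx'x⟩ : ∃ x', x' < x := by simpa [IsBot] using hx
  obtain ⟨l, hlx, hl⟩ := exists_Ioc_subset_of_mem_nhds hA
    ⟨toLex (x', b), Prod.Lex.toLex_lt_toLex.mpr (.inl hx'x)⟩
  have hlx₁ : (ofLex l).1 < x := by
    rcases Prod.Lex.lt_iff.mp hlx with h | ⟨-, h⟩
    · exact h
    · exact absurd (hb _) h.not_ge
  refine ⟨(ofLex l).1, hlx₁, fun y hy c ↦ hl ⟨?_, ?_⟩⟩
  · exact Prod.Lex.lt_iff.mpr (.inl hy.1)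
  · exact (Prod.Lex.toLex_lt_toLex.mpr (.inl hy.2)).le

variable [TopologicalSpace α] [OrderTopology α] [SecondCountableTopology α]

theorem Prod.Lex.countable_setOf_mem_and_notMem_of_isTop (hA : IsOpen A) (hb : IsTop b)
    (c : β) : {x | toLex (x, b) ∈ A ∧ toLex (x, c) ∉ A}.Countable := by
  refine countable_of_forall_exists_gap_right fun x hxs hx ↦ ?_
  obtain ⟨z, hxz, hz⟩ := exists_gt_forall_mem_of_mem_nhds (hA.mem_nhds hxs.1) hb hx
  exact ⟨z, hxz, fun y hys hxy ↦ not_lt.mp fun hyz ↦ hys.2 (hz y ⟨hxy, hyz⟩ c)⟩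

theorem Prod.Lex.countable_setOf_mem_and_notMem_of_isBot (hA : IsOpen A) (hb : IsBot b)
    (c : β) : {x | toLex (x, b) ∈ A ∧ toLex (x, c) ∉ A}.Countable := by
  refine countable_of_forall_exists_gap_left fun x hxs hx ↦ ?_
  obtain ⟨z, hzx, hz⟩ := exists_lt_forall_mem_of_mem_nhds (hA.mem_nhds hxs.1) hb hx
  exact ⟨z, hzx, fun y hys hyx ↦ not_lt.mp fun hzy ↦ hys.2 (hz y ⟨hzy, hyx⟩ c)⟩

end Lex

/-- For every open set `A` in the double arrow space the symmetric difference
`A⁺ Δ A⁻` is countable, where `A⁺ = {x : (x,1) ∈ A}` and `A⁻ = {x : (x,0) ∈ A}`. -/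
theorem doubleArrow_isOpen_symmDiff_countable (A : Set DoubleArrow) (hA : IsOpen A) :
    Set.Countable
      ({x : ↥(Set.Icc (0:ℝ) 1) | (toLex (x, (1 : Fin 2)) : DoubleArrow) ∈ A} ∆
       {x : ↥(Set.Icc (0:ℝ) 1) | (toLex (x, (0 : Fin 2)) : DoubleArrow) ∈ A}) := by
  rw [Set.symmDiff_def]
  exact (Prod.Lex.countable_setOf_mem_and_notMem_of_isTop hA (fun _ ↦ Fin.le_last _) 0).union
    (Prod.Lex.countable_setOf_mem_and_notMem_of_isBot hA (fun _ ↦ Fin.zero_le _) 1)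
end

section
/- Let X be the set [0,1] × {0,1} endowed with the order topology of the lexicographic order, equipped with its Borel σ-algebra. For a set B ⊆ X write B⁺ = {x ∈ [0,1] : (x,1) ∈ B} and B⁻ = {x ∈ [0,1] : (x,0) ∈ B}. Then for every Borel measurable set B ⊆ X, the symmetric difference B⁺ Δ B⁻ is a countable set. -/
open scoped symmDiff

noncomputable instance : MeasurableSpace DoubleArrow := borel DoubleArrow

/-!
The sets `B` for which `B⁺ Δ B⁻` is countable form a σ-algebra, so it suffices to treat open `U`.
As `z ↓ x` the points `(z,0)` converge to `(x,1)`, so if `(x,1) ∈ U` but `(x,0) ∉ U`, then `x` is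
isolated from the right in `U⁺ \ U⁻`; in the second countable space `[0,1]` there are only
countably many such points. The same argument from the left handles `U⁻ \ U⁺`.
-/

open Set Filter Topology

section CountableSymmDiffPreimage

variable {α β : Type*}

abbrev MeasurableSpace.countableSymmDiffPreimage (f g : α → β) : MeasurableSpace β where
  MeasurableSet' s := ((f ⁻¹' s) ∆ (g ⁻¹' s)).Countable
  measurableSet_empty := by simp
  measurableSet_compl s hs := by rwa [preimage_compl, preimage_compl, compl_symmDiff_compl]
  measurableSet_iUnion s hs := by
    simp only [preimage_iUnion]
    exact (countable_iUnion hs).mono iUnion_symmDiff_iUnion_subset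

variable [LinearOrder α] [TopologicalSpace α] [OrderTopology α] [SecondCountableTopology α]
  [TopologicalSpace β] {f g : α → β} {U : Set β}

theorem countable_preimage_sdiff_of_tendsto_nhdsGT
    (hfg : ∀ x, Tendsto g (𝓝[>] x) (𝓝 (f x))) (hU : IsOpen U) :
    (f ⁻¹' U \ g ⁻¹' U).Countable := by
  set S := f ⁻¹' U \ g ⁻¹' U
  refine (countable_setOfPred_isolated_right_within (s := S)).mono fun x hx => ?_
  refine ⟨hx, ?_⟩
  have hg : g ⁻¹' U ∈ 𝓝[S ∩ Ioi x] x :=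
    nhdsWithin_mono x inter_subset_right (hfg x (hU.mem_nhds hx.1))
  have hS : S ∈ 𝓝[S ∩ Ioi x] x := nhdsWithin_mono x inter_subset_left self_mem_nhdsWithin
  rw [← empty_mem_iff_bot]
  exact mem_of_superset (inter_mem hS hg) fun z hz => hz.1.2 hz.2

theorem countable_preimage_sdiff_of_tendsto_nhdsLT
    (hfg : ∀ x, Tendsto g (𝓝[<] x) (𝓝 (f x))) (hU : IsOpen U) :
    (f ⁻¹' U \ g ⁻¹' U).Countable :=
  countable_preimage_sdiff_of_tendsto_nhdsGT (α := αᵒᵈ) hfg hU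

theorem borel_le_countableSymmDiffPreimage
    (hGT : ∀ x, Tendsto g (𝓝[>] x) (𝓝 (f x))) (hLT : ∀ x, Tendsto f (𝓝[<] x) (𝓝 (g x))) :
    borel β ≤ MeasurableSpace.countableSymmDiffPreimage f g :=
  MeasurableSpace.generateFrom_le fun _ hU => show Set.Countable (_ ∪ _) from
    (countable_preimage_sdiff_of_tendsto_nhdsGT hGT hU).union
      (countable_preimage_sdiff_of_tendsto_nhdsLT hLT hU)

end CountableSymmDiffPreimage

section Lex

open Prod.Lex

variable {α β : Type*} [LinearOrder α] [TopologicalSpace α] [OrderTopology α] [LinearOrder β]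
  [TopologicalSpace (α ×ₗ β)] [OrderTopology (α ×ₗ β)]

theorem tendsto_toLex_nhdsGT {a : β} (ha : IsMax a) (b : β) (x : α) :
    Tendsto (fun z => toLex (z, b)) (𝓝[>] x) (𝓝 (toLex (x, a))) := by
  refine tendsto_order.2 ⟨fun c hc => ?_, fun c hc => ?_⟩
  · filter_upwards [self_mem_nhdsWithin] with z (hxz : x < z)
    exact hc.trans (toLex_lt_toLex.2 (Or.inl hxz))
  · obtain ⟨⟨w, j⟩, rfl⟩ := toLex.surjective c
    rcases toLex_lt_toLex.1 hc with hxw | ⟨-, haj⟩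
    · filter_upwards [nhdsWithin_le_nhds (Iio_mem_nhds hxw)] with z (hzw : z < w)
      exact toLex_lt_toLex.2 (Or.inl hzw)
    · exact absurd haj ha.not_lt

theorem tendsto_toLex_nhdsLT {b : β} (hb : IsMin b) (a : β) (x : α) :
    Tendsto (fun z => toLex (z, a)) (𝓝[<] x) (𝓝 (toLex (x, b))) := by
  refine tendsto_order.2 ⟨fun c hc => ?_, fun c hc => ?_⟩
  · obtain ⟨⟨w, j⟩, rfl⟩ := toLex.surjective c
    rcases toLex_lt_toLex.1 hc with hwx | ⟨-, hjb⟩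
    · filter_upwards [nhdsWithin_le_nhds (Ioi_mem_nhds hwx)] with z (hwz : w < z)
      exact toLex_lt_toLex.2 (Or.inl hwz)
    · exact absurd hjb hb.not_lt
  · filter_upwards [self_mem_nhdsWithin] with z (hzx : z < x)
    exact (toLex_lt_toLex.2 (Or.inl hzx)).trans hc

end Lex

/-- For every Borel set `B` in the double arrow space the symmetric difference
`B⁺ Δ B⁻` is countable, where `B⁺ = {x : (x,1) ∈ B}` and `B⁻ = {x : (x,0) ∈ B}`. -/
theorem doubleArrow_measurableSet_symmDiff_countable (B : Set DoubleArrow)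
    (hB : MeasurableSet B) :
    Set.Countable
      ({x : ↥(Set.Icc (0:ℝ) 1) | (toLex (x, (1 : Fin 2)) : DoubleArrow) ∈ B} ∆
       {x : ↥(Set.Icc (0:ℝ) 1) | (toLex (x, (0 : Fin 2)) : DoubleArrow) ∈ B}) :=
  have h1 : IsMax (1 : Fin 2) := fun j _ => Fin.le_last j
  have h0 : IsMin (0 : Fin 2) := fun j _ => Fin.zero_le j
  borel_le_countableSymmDiffPreimage (tendsto_toLex_nhdsGT h1 0) (tendsto_toLex_nhdsLT h0 1) B hB
end

section
/- Let X be the set [0,1] × {0,1} endowed with the order topology of the lexicographic order, equipped with its Borel σ-algebra. Then the set E = {(x,0) : x ∈ [0,1]} is not Borel measurable in X. -/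
namespace DoubleArrowAux

open Set

abbrev I : Type := ↥(Set.Icc (0:ℝ) 1)

noncomputable def p0 (x : I) : DoubleArrow := toLex (x, (0 : Fin 2))
noncomputable def p1 (x : I) : DoubleArrow := toLex (x, (1 : Fin 2))

lemma lt01 {x y : I} (h : x < y) : p1 x < p0 y := by
  simp only [p1, p0, Prod.Lex.lt_iff]; exact Or.inl h

lemma lt00 {x y : I} (h : x < y) : p0 x < p0 y := by
  simp only [p0, Prod.Lex.lt_iff]; exact Or.inl h

lemma lt11 {x y : I} (h : x < y) : p1 x < p1 y := by
  simp only [p1, Prod.Lex.lt_iff]; exact Or.inl h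

lemma lt0_first {x : I} {l : DoubleArrow} (h : l < p0 x) : (ofLex l).1 < x := by
  rw [p0, show l = toLex (ofLex l) from rfl, Prod.Lex.lt_iff] at h
  rcases h with h | ⟨_, h2⟩
  · exact h
  · exact absurd h2 (by simp [Fin.not_lt_zero])

lemma lt1_first {x : I} {u : DoubleArrow} (h : p1 x < u) : x < (ofLex u).1 := by
  rw [p1, show u = toLex (ofLex u) from rfl, Prod.Lex.lt_iff] at h
  rcases h with h | ⟨_, h2⟩
  · exact h
  · exfalso
    have h2' : (1 : Fin 2) < (ofLex u).2 := h2
    have h3 := (ofLex u).2.isLt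
    rw [Fin.lt_def, Fin.val_one] at h2'
    omega

/-- The countability index sets: for an open `U`, those `x` with `(x,0) ∈ U` and
`(x,1) ∉ U`, localized at a rational `q`. -/
def S0 (U : Set DoubleArrow) (q : ℚ) : Set I :=
  {x : I | ∃ hq : (q : ℝ) ∈ Set.Icc (0:ℝ) 1,
      (⟨q, hq⟩ : I) < x ∧ Ioc (p1 ⟨q, hq⟩) (p0 x) ⊆ U}

def S1 (U : Set DoubleArrow) (q : ℚ) : Set I :=
  {x : I | ∃ hq : (q : ℝ) ∈ Set.Icc (0:ℝ) 1,
      x < (⟨q, hq⟩ : I) ∧ Ico (p1 x) (p0 ⟨q, hq⟩) ⊆ U}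

def D0 (U : Set DoubleArrow) : Set I := {x : I | p0 x ∈ U ∧ p1 x ∉ U}
def D1 (U : Set DoubleArrow) : Set I := {x : I | p1 x ∈ U ∧ p0 x ∉ U}

lemma D0_countable {U : Set DoubleArrow} (hU : IsOpen U) : (D0 U).Countable := by
  have hzero : (0:ℝ) ∈ Set.Icc (0:ℝ) 1 := by norm_num
  have hsub : D0 U ⊆ insert (⟨0, hzero⟩ : I) (⋃ q : ℚ, D0 U ∩ S0 U q) := by
    intro x hx
    by_cases hx0 : x = (⟨0, hzero⟩ : I)
    · exact mem_insert_iff.2 (Or.inl hx0)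
    · refine mem_insert_iff.2 (Or.inr ?_)
      have hxpos : (⟨0, hzero⟩ : I) < x := by
        rcases lt_or_eq_of_le (show (0:ℝ) ≤ (x:ℝ) from x.2.1) with h | h
        · exact Subtype.coe_lt_coe.mp h
        · exact absurd (Subtype.ext h.symm) hx0
      have hnhds : U ∈ nhds (p0 x) := hU.mem_nhds hx.1
      obtain ⟨l, hl, hlsub⟩ := exists_Ioc_subset_of_mem_nhds hnhds
        ⟨p0 ⟨0, hzero⟩, lt00 hxpos⟩
      have ha : ((ofLex l).1 : ℝ) < (x : ℝ) := Subtype.coe_lt_coe.mpr (lt0_first hl)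
      obtain ⟨q, hq1, hq2⟩ := exists_rat_btwn ha
      have hq : (q : ℝ) ∈ Set.Icc (0:ℝ) 1 :=
        ⟨le_of_lt (lt_of_le_of_lt ((ofLex l).1.2.1) hq1), le_of_lt (lt_of_lt_of_le hq2 x.2.2)⟩
      refine mem_iUnion.2 ⟨q, hx, hq, Subtype.coe_lt_coe.mp hq2, ?_⟩
      refine subset_trans (Ioc_subset_Ioc_left ?_) hlsub
      rw [p1, show l = toLex (ofLex l) from rfl, Prod.Lex.le_iff]
      exact Or.inl (Subtype.coe_lt_coe.mp hq1)
  refine Countable.mono hsub (Countable.insert _ (countable_iUnion fun q => ?_))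
  have key : ∀ x ∈ D0 U ∩ S0 U q, ∀ y ∈ D0 U ∩ S0 U q, x < y → False := by
    rintro x ⟨hxD, hqx, hqltx, _⟩ y ⟨_, hqy, _, hsuby⟩ hxy
    exact hxD.2 (hsuby ⟨lt11 hqltx, le_of_lt (lt01 hxy)⟩)
  refine Set.Subsingleton.countable fun x hx y hy => ?_
  rcases lt_trichotomy x y with h | h | h
  · exact absurd (key x hx y hy h) not_false
  · exact h
  · exact absurd (key y hy x hx h) not_false

lemma D1_countable {U : Set DoubleArrow} (hU : IsOpen U) : (D1 U).Countable := by
  have hone : (1:ℝ) ∈ Set.Icc (0:ℝ) 1 := by norm_num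
  have hsub : D1 U ⊆ insert (⟨1, hone⟩ : I) (⋃ q : ℚ, D1 U ∩ S1 U q) := by
    intro x hx
    by_cases hx1 : x = (⟨1, hone⟩ : I)
    · exact mem_insert_iff.2 (Or.inl hx1)
    · refine mem_insert_iff.2 (Or.inr ?_)
      have hxlt : x < (⟨1, hone⟩ : I) := by
        rcases lt_or_eq_of_le (show (x:ℝ) ≤ 1 from x.2.2) with h | h
        · exact Subtype.coe_lt_coe.mp h
        · exact absurd (Subtype.ext h) hx1
      have hnhds : U ∈ nhds (p1 x) := hU.mem_nhds hx.1
      obtain ⟨u', hu', husub⟩ := exists_Ico_subset_of_mem_nhds hnhds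
        ⟨p1 ⟨1, hone⟩, lt11 hxlt⟩
      have ha : (x : ℝ) < ((ofLex u').1 : ℝ) := Subtype.coe_lt_coe.mpr (lt1_first hu')
      obtain ⟨q, hq1, hq2⟩ := exists_rat_btwn ha
      have hq : (q : ℝ) ∈ Set.Icc (0:ℝ) 1 :=
        ⟨le_of_lt (lt_of_le_of_lt x.2.1 hq1), le_of_lt (lt_of_lt_of_le hq2 ((ofLex u').1.2.2))⟩
      refine mem_iUnion.2 ⟨q, hx, hq, Subtype.coe_lt_coe.mp hq1, ?_⟩
      refine subset_trans (Ico_subset_Ico_right ?_) husub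
      rw [p0, show u' = toLex (ofLex u') from rfl, Prod.Lex.le_iff]
      exact Or.inl (Subtype.coe_lt_coe.mp hq2)
  refine Countable.mono hsub (Countable.insert _ (countable_iUnion fun q => ?_))
  have key : ∀ x ∈ D1 U ∩ S1 U q, ∀ y ∈ D1 U ∩ S1 U q, x < y → False := by
    rintro x ⟨_, hqx, _, hsubx⟩ y ⟨hyD, hqy, hyltq, _⟩ hxy
    exact hyD.2 (hsubx ⟨le_of_lt (lt01 hxy), lt00 hyltq⟩)
  refine Set.Subsingleton.countable fun x hx y hy => ?_
  rcases lt_trichotomy x y with h | h | h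
  · exact absurd (key x hx y hy h) not_false
  · exact h
  · exact absurd (key y hy x hx h) not_false

def D (B : Set DoubleArrow) : Set I := {x : I | ¬ (p0 x ∈ B ↔ p1 x ∈ B)}

lemma D_countable {B : Set DoubleArrow} (hB : MeasurableSet B) : (D B).Countable := by
  have hB' : @MeasurableSet DoubleArrow (MeasurableSpace.generateFrom {s : Set DoubleArrow | IsOpen s}) B := hB
  refine MeasurableSpace.generateFrom_induction {s : Set DoubleArrow | IsOpen s}
    (fun s _ => (D s).Countable) ?_ ?_ ?_ ?_ B hB'
  case refine_1 =>
    intro t ht _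
    have : D t ⊆ D0 t ∪ D1 t := by
      intro x hx
      by_cases h0 : p0 x ∈ t
      · exact Or.inl ⟨h0, fun h1 => hx ⟨fun _ => h1, fun _ => h0⟩⟩
      · by_cases h1 : p1 x ∈ t
        · exact Or.inr ⟨h1, h0⟩
        · exact absurd ⟨fun h => absurd h h0, fun h => absurd h h1⟩ hx
    exact Countable.mono this ((D0_countable ht).union (D1_countable ht))
  case refine_2 => simp [D]
  case refine_3 =>
    intro t _ ih
    refine Countable.mono ?_ ih
    intro x hx
    simp only [D, mem_setOf_eq, mem_compl_iff] at hx ⊢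
    tauto
  case refine_4 =>
    intro s _ ih
    have : D (⋃ i, s i) ⊆ ⋃ i, D (s i) := by
      intro x hx
      simp only [D, mem_setOf_eq, mem_iUnion] at hx ⊢
      by_cases h0 : ∃ i, p0 x ∈ s i
      · obtain ⟨i, hi⟩ := h0
        have h1 : p1 x ∉ s i := fun h => hx ⟨fun _ => ⟨i, h⟩, fun _ => ⟨i, hi⟩⟩
        exact ⟨i, fun h => h1 (h.1 hi)⟩
      · push_neg at h0
        have h1 : ∃ i, p1 x ∈ s i := by
          by_contra h1
          push_neg at h1
          exact hx ⟨fun ⟨i, h⟩ => absurd h (h0 i), fun ⟨i, h⟩ => absurd h (h1 i)⟩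
        obtain ⟨i, hi⟩ := h1
        exact ⟨i, fun h => (h0 i) (h.2 hi)⟩
    exact Countable.mono this (countable_iUnion ih)

end DoubleArrowAux

open DoubleArrowAux in
/-- The set `E = {(x,0) : x ∈ [0,1]}` is not Borel measurable in the double arrow space. -/
theorem doubleArrow_not_measurableSet :
    ¬ MeasurableSet {p : DoubleArrow | (ofLex p).2 = (0 : Fin 2)} := by
  intro h
  have hc := D_countable h
  have huniv : D {p : DoubleArrow | (ofLex p).2 = (0 : Fin 2)} = Set.univ := by
    ext x
    simp only [D, Set.mem_setOf_eq, Set.mem_univ, iff_true]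
    intro hiff
    have h0 : (ofLex (p0 x)).2 = (0 : Fin 2) := rfl
    have h1 : (ofLex (p1 x)).2 = (1 : Fin 2) := rfl
    have := hiff.1 h0
    rw [h1] at this
    exact absurd this (by decide)
  rw [huniv] at hc
  have : Countable I := Set.countable_univ_iff.mp hc
  have hmk : Cardinal.mk I ≤ Cardinal.aleph0 := Cardinal.mk_le_aleph0_iff.mpr this
  rw [Cardinal.mk_Icc_real zero_lt_one] at hmk
  exact absurd hmk (not_le.mpr Cardinal.aleph0_lt_continuum)
end

section
/- Let E be an uncountable set with the discrete topology and let X = E ∪ {∞} be its one-point (Aleksandrov) compactification. If g : X → ℝ is a pointwise limit of a sequence of continuous functions gₙ : X → ℝ, then the set {x ∈ X : g(x) ≠ g(∞)} is countable. -/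
open Filter OnePoint Topology

lemma aux {E : Type*} [TopologicalSpace E] [DiscreteTopology E]
    (f : OnePoint E → ℝ) (hf : Continuous f) :
    {x : OnePoint E | f x ≠ f OnePoint.infty}.Countable := by
  have ht : Tendsto (fun x : E => f x) cofinite (𝓝 (f ∞)) := by
    have := (hf.tendsto ∞).comp (OnePoint.tendsto_coe_infty (X := E))
    rwa [coclosedCompact_eq_cocompact, cocompact_eq_cofinite] at this
  have key : {x : E | f x ≠ f ∞}.Countable := by
    have : {x : E | f x ≠ f ∞} ⊆ ⋃ k : ℕ, {x : E | (k+1:ℝ)⁻¹ ≤ dist (f x) (f ∞)} := by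
      intro x hx
      obtain ⟨k, hk⟩ := exists_nat_one_div_lt (dist_pos.2 hx)
      exact Set.mem_iUnion.2 ⟨k, by rw [one_div] at hk; exact hk.le⟩
    refine Set.Countable.mono this (Set.countable_iUnion fun k => Set.Finite.countable ?_)
    have : ∀ᶠ (x : E) in cofinite, dist (f (↑x)) (f ∞) < (k+1:ℝ)⁻¹ :=
      ht (Metric.ball_mem_nhds _ (inv_pos.2 (Nat.cast_add_one_pos k)))
    simpa [Filter.eventually_cofinite, not_lt] using this
  have : {x : OnePoint E | f x ≠ f ∞} ⊆ (↑) '' {x : E | f x ≠ f ∞} ∪ {∞} := by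
    intro x hx
    cases x using OnePoint.rec with
    | infty => simp at hx
    | coe y => exact Or.inl ⟨y, hx, rfl⟩
  exact ((key.image _).union (Set.countable_singleton _)).mono this

/-- If `g` is a pointwise limit of continuous functions on the one-point compactification of
an uncountable discrete space, then `g` differs from `g(∞)` only on a countable set. -/
theorem onePoint_pointwiseLimit_countable_support {E : Type*} [TopologicalSpace E]
    [DiscreteTopology E] [Uncountable E]
    (g : OnePoint E → ℝ) (gs : ℕ → OnePoint E → ℝ)
    (hc : ∀ n, Continuous (gs n))
    (hlim : ∀ x, Filter.Tendsto (fun n => gs n x) Filter.atTop (nhds (g x))) :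
    {x : OnePoint E | g x ≠ g OnePoint.infty}.Countable := by
  have sub : {x : OnePoint E | g x ≠ g OnePoint.infty} ⊆
      ⋃ n, {x : OnePoint E | gs n x ≠ gs n OnePoint.infty} := by
    intro x hx
    by_contra h
    simp only [Set.mem_iUnion, Set.mem_setOf_eq, not_exists, not_ne_iff] at h
    exact hx (tendsto_nhds_unique (hlim x) (by simpa [h] using hlim OnePoint.infty))
  exact (Set.countable_iUnion fun n => aux _ (hc n)).mono sub
end

section
/- Let E be an uncountable set with the discrete topology, let X = E ∪ {∞} be its one-point (Aleksandrov) compactification, and let E = E₁ ⊔ E₂ be a partition of E into two disjoint uncountable sets. Define f : E → ℝ by f(x) = 1 if x ∈ E₁ and f(x) = 0 if x ∈ E₂. Then there is no mapping g : X → ℝ of the first Lebesgue class (i.e. such that g⁻¹(V) is an Fσ-set in X for every open V ⊆ ℝ) with g restricted to E equal to f. -/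
/-!
A closed subset of `OnePoint E` avoiding `∞` is a compact subset of the discrete space `E`,
hence finite, so an Fσ set avoiding `∞` is countable. Applied to `g ⁻¹' {y | y ≠ g ∞}`, this
shows that a first Lebesgue class map `g` on `OnePoint E` takes the value `g ∞` at all but
countably many points of `E`. An extension of the indicator of `E₁` differs from `g ∞` on all
of `E₁` (if `g ∞ ≠ 1`) or on all of `E₂` (if `g ∞ = 1`), and both sets are uncountable.
-/

namespace OnePoint

variable {E : Type*} [TopologicalSpace E] [DiscreteTopology E]

theorem finite_of_isClosed_of_infty_notMem {s : Set (OnePoint E)} (hs : IsClosed s)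
    (h : ∞ ∉ s) : s.Finite := by
  have hrange : s ⊆ Set.range ((↑) : E → OnePoint E) :=
    compl_infty (X := E) ▸ Set.subset_compl_singleton_iff.2 h
  rw [← Set.image_preimage_eq_of_subset hrange]
  exact ((isClosed_iff_of_notMem h).1 hs).2.finite_of_discrete.image _

theorem countable_of_isFsigma_of_infty_notMem {s : Set (OnePoint E)} (hs : IsFsigma s)
    (h : ∞ ∉ s) : s.Countable := by
  obtain ⟨F, hF, rfl⟩ := hs
  refine Set.countable_iUnion fun n => (finite_of_isClosed_of_infty_notMem (hF n) ?_).countable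
  exact fun hn => h (Set.mem_iUnion_of_mem n hn)

end OnePoint

open OnePoint in
theorem LebesgueClassOne.countable_setOf_ne_infty {E Y : Type*} [TopologicalSpace E]
    [DiscreteTopology E] [TopologicalSpace Y] [T1Space Y] {g : OnePoint E → Y}
    (hg : LebesgueClassOne g) : {x : E | g x ≠ g ∞}.Countable :=
  (countable_of_isFsigma_of_infty_notMem (hg _ isOpen_ne) (fun h => h rfl)).preimage
    coe_injective

theorem no_lebesgueClassOne_extension_onePoint_general {E : Type*} [TopologicalSpace E]
    [DiscreteTopology E]
    (E₁ E₂ : Set E) (h1 : ¬ E₁.Countable) (h2 : ¬ E₂.Countable)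
    (hdisj : Disjoint E₁ E₂)
    [DecidablePred (· ∈ E₁)]
    (f : E → ℝ) (hf : ∀ x, f x = if x ∈ E₁ then (1:ℝ) else 0) :
    ¬ ∃ g : OnePoint E → ℝ, LebesgueClassOne g ∧ ∀ x : E, g (x : OnePoint E) = f x := by
  rintro ⟨g, hg, hgf⟩
  have hcount := hg.countable_setOf_ne_infty
  by_cases hinf : g OnePoint.infty = 1
  · refine h2 (hcount.mono fun x hx => ?_)
    have hx₁ : x ∉ E₁ := hdisj.notMem_of_mem_right hx
    simp [hgf, hf, hx₁, hinf]
  · refine h1 (hcount.mono fun x hx => ?_)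
    simp [hgf, hf, hx, Ne.symm hinf]

/-- The characteristic function of an uncountable-co-uncountable partition of an uncountable
discrete space `E` admits no first Lebesgue class extension to the one-point
compactification of `E`. -/
theorem no_lebesgueClassOne_extension_onePoint {E : Type*} [TopologicalSpace E]
    [DiscreteTopology E] [Uncountable E]
    (E₁ E₂ : Set E) (h1 : ¬ E₁.Countable) (h2 : ¬ E₂.Countable)
    (hdisj : Disjoint E₁ E₂) (hunion : E₁ ∪ E₂ = Set.univ)
    [DecidablePred (· ∈ E₁)]
    (f : E → ℝ) (hf : ∀ x, f x = if x ∈ E₁ then (1:ℝ) else 0) :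
    ¬ ∃ g : OnePoint E → ℝ, LebesgueClassOne g ∧ ∀ x : E, g (x : OnePoint E) = f x :=
  no_lebesgueClassOne_extension_onePoint_general E₁ E₂ h1 h2 hdisj f hf
end
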